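/- arXiv:1112.1307 — 6 statements merged into one kernel-verified Lean document; each statement's English description precedes it below -/
import Mathlib

section
/- Let X be a topological space, p : X → S continuous to the Sierpinski space, X₀ = p⁻¹(0), X₁ = p⁻¹(1). If U ⊆ X is open, U₀ = U ∩ X₀ and U₁ = U ∩ X₁, then U = interior(U₀ ∪ X₁) ∩ (X₀ ∪ U₁). -/
theorem IsOpen.eq_interior_inter_union_compl_inter_union_inter_compl
    {X : Type*} [TopologicalSpace X] {U : Set X} (hU : IsOpen U) (s : Set X) :
    U = interior (U ∩ s ∪ sᶜ) ∩ (s ∪ U ∩ sᶜ) := by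
  apply subset_antisymm
  · intro x hx
    exact ⟨interior_maximal (Set.subset_inter_union_compl_right U s) hU hx,
      (em (x ∈ s)).imp id (⟨hx, ·⟩)⟩
  · rintro x ⟨hx, hxs | ⟨hxU, -⟩⟩
    · exact ((interior_subset hx).resolve_right (not_not_intro hxs)).1
    · exact hxU

theorem open_eq_interior_inter_of_sierpinski_general
    {X : Type*} [TopologicalSpace X] (p : X → Prop)
    (X₀ X₁ : Set X) (hX₀ : X₀ = {x | p x}) (hX₁ : X₁ = {x | ¬ p x})
    (U : Set X) (hU : IsOpen U) :
    U = interior ((U ∩ X₀) ∪ X₁) ∩ (X₀ ∪ (U ∩ X₁)) := by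
  subst hX₀ hX₁
  exact hU.eq_interior_inter_union_compl_inter_union_inter_compl {x | p x}

/-- For a continuous map `p : X → S` to the Sierpinski space
(`Prop` with the Sierpinski topology, open point `True`), with `X₀ = p⁻¹(0)`
open and `X₁ = p⁻¹(1)` closed, any open `U ⊆ X` satisfies
`U = interior (U₀ ∪ X₁) ∩ (X₀ ∪ U₁)` where `U₀ = U ∩ X₀`, `U₁ = U ∩ X₁`. -/
theorem open_eq_interior_inter_of_sierpinski
    {X : Type*} [TopologicalSpace X] (p : X → Prop) (hp : Continuous p)
    (X₀ X₁ : Set X) (hX₀ : X₀ = {x | p x}) (hX₁ : X₁ = {x | ¬ p x})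
    (U : Set X) (hU : IsOpen U) :
    U = interior ((U ∩ X₀) ∪ X₁) ∩ (X₀ ∪ (U ∩ X₁)) :=
  open_eq_interior_inter_of_sierpinski_general p X₀ X₁ hX₀ hX₁ U hU
end

section
/- Let X be a topological space, p : X → S continuous to the Sierpinski space, X₀ = p⁻¹(0), X₁ = p⁻¹(1), and m(U₀) = interior(U₀ ∪ X₁) ∩ X₁ for open U₀ ⊆ X₀. Then a subset U ⊆ X is open in X if and only if U ∩ X₀ is open in X₀, U ∩ X₁ is open in X₁, and U ∩ X₁ ⊆ m(U ∩ X₀). -/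
/-!
Continuity of `p` makes `X₀` open, and `X₁ = X₀ᶜ`. For an open `A`, relative openness of
`U ∩ A` already gives openness in `X`; on `Aᶜ` one needs the extra condition that `U ∩ A ∪ Aᶜ`
be a neighbourhood of `U ∩ Aᶜ`: if `V` is open with `V ∩ Aᶜ = U ∩ Aᶜ`, then
`U = (U ∩ A) ∪ (V ∩ interior (U ∩ A ∪ Aᶜ))`.
-/

open Set
open scoped Set.Notation

namespace IsOpen

variable {X : Type*} [TopologicalSpace X] {A U : Set X}

theorem isOpen_iff_preimage_val_and_subset_interior (hA : IsOpen A) :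
    IsOpen U ↔ IsOpen (A ↓∩ U) ∧ IsOpen (Aᶜ ↓∩ U) ∧ U ∩ Aᶜ ⊆ interior (U ∩ A ∪ Aᶜ) := by
  have hU_sub : U ⊆ U ∩ A ∪ Aᶜ := fun x hx => (em (x ∈ A)).imp (fun hxA => ⟨hx, hxA⟩) id
  refine ⟨fun hU => ⟨hU.preimage_val, hU.preimage_val, ?_⟩, ?_⟩
  · exact inter_subset_left.trans (hU.subset_interior_iff.mpr hU_sub)
  · rintro ⟨hUA, hUAc, hsub⟩
    obtain ⟨V, hV, hVU⟩ := isOpen_induced_iff.mp hUAc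
    rw [Subtype.preimage_coe_eq_preimage_coe_iff] at hVU
    have hU_eq : U = U ∩ A ∪ V ∩ interior (U ∩ A ∪ Aᶜ) := by
      refine Subset.antisymm (fun x hx => ?_) ?_
      · by_cases hxA : x ∈ A
        · exact .inl ⟨hx, hxA⟩
        · exact .inr ⟨(hVU ▸ ⟨hxA, hx⟩ : x ∈ Aᶜ ∩ V).2, hsub ⟨hx, hxA⟩⟩
      · rintro x (hx | ⟨hxV, hxW⟩)
        · exact hx.1
        · rcases interior_subset hxW with hx | hxA
          · exact hx.1
          · exact (hVU ▸ ⟨hxA, hxV⟩ : x ∈ Aᶜ ∩ U).2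
    rw [hU_eq, inter_comm U A]
    exact (hA.inter_preimage_val_iff.mp hUA).union (hV.inter isOpen_interior)

end IsOpen

/-- For a continuous `p : X → S` to the Sierpinski space
(`Prop`, open point `True`), `X₀ = p⁻¹(0)`, `X₁ = p⁻¹(1)`, and
`m U₀ = interior (U₀ ∪ X₁) ∩ X₁`, a subset `U ⊆ X` is open iff `U ∩ X₀` is open
in the subspace `X₀`, `U ∩ X₁` is open in the subspace `X₁`, and
`U ∩ X₁ ⊆ m (U ∩ X₀)`. -/
theorem isOpen_iff_sierpinski_glueing
    {X : Type*} [TopologicalSpace X] (p : X → Prop) (hp : Continuous p)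
    (X₀ X₁ : Set X) (hX₀ : X₀ = {x | p x}) (hX₁ : X₁ = {x | ¬ p x})
    (m : Set X → Set X) (hm : ∀ U, m U = interior (U ∪ X₁) ∩ X₁)
    (U : Set X) :
    IsOpen U ↔
      IsOpen ((Subtype.val : X₀ → X) ⁻¹' U) ∧
      IsOpen ((Subtype.val : X₁ → X) ⁻¹' U) ∧
      U ∩ X₁ ⊆ m (U ∩ X₀) := by
  have hX₀_open : IsOpen X₀ := hX₀ ▸ isOpen_iff_continuous_mem.mpr hp
  obtain rfl : X₁ = X₀ᶜ := by rw [hX₀, hX₁]; rfl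
  rw [hm, subset_inter_iff, and_iff_left inter_subset_right]
  exact hX₀_open.isOpen_iff_preimage_val_and_subset_interior
end

section
/- Let X₀, X₁ be topological spaces, m : 𝒪(X₀) → 𝒪(X₁) finite-intersection-preserving, and let X₀ +ₘ X₁ denote the disjoint union X₀ ⊔ X₁ with the glueing topology (U₀ ⊔ U₁ open iff U₀, U₁ open and U₁ ⊆ m(U₀)). Then the canonical inclusion X₀ → X₀ +ₘ X₁ is an open embedding and the canonical inclusion X₁ → X₀ +ₘ X₁ is a closed embedding. -/
/-! Both inclusions are continuous because the glueing topology constrains only the two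
preimages. The inclusion of `X₀` is an open map, since `inl '' U` meets `X₁` in `∅ ⊆ m U`.
The inclusion of `X₁` is a closed map, since the complement of `inr '' C` is
`X₀ ⊔ Cᶜ`, which is open because `m univ = univ`. -/

open Topology Set

namespace GlueingTopology

variable {X₀ X₁ : Type*} [TopologicalSpace X₀] [TopologicalSpace X₁]

/-- `t` is the glueing topology `X₀ +ₘ X₁`. -/
def IsGlueingTopology (m : Set X₀ → Set X₁) (t : TopologicalSpace (X₀ ⊕ X₁)) :
    Prop :=
  ∀ S : Set (X₀ ⊕ X₁),
    IsOpen[t] S ↔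
      IsOpen (Sum.inl ⁻¹' S) ∧ IsOpen (Sum.inr ⁻¹' S) ∧
        Sum.inr ⁻¹' S ⊆ m (Sum.inl ⁻¹' S)

variable {m : Set X₀ → Set X₁} {t : TopologicalSpace (X₀ ⊕ X₁)}

theorem continuous_inl (ht : IsGlueingTopology m t) :
    Continuous[_, t] (Sum.inl : X₀ → X₀ ⊕ X₁) :=
  ⟨fun S hS => ((ht S).mp hS).1⟩

theorem continuous_inr (ht : IsGlueingTopology m t) :
    Continuous[_, t] (Sum.inr : X₁ → X₀ ⊕ X₁) :=
  ⟨fun S hS => ((ht S).mp hS).2.1⟩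

theorem isOpenMap_inl (ht : IsGlueingTopology m t) :
    @IsOpenMap X₀ (X₀ ⊕ X₁) _ t Sum.inl := by
  intro U hU
  rw [ht, preimage_image_eq _ Sum.inl_injective, preimage_inr_image_inl]
  exact ⟨hU, isOpen_empty, empty_subset _⟩

theorem isClosedMap_inr (ht : IsGlueingTopology m t) (hm_top : m univ = univ) :
    @IsClosedMap X₁ (X₀ ⊕ X₁) _ t Sum.inr := by
  intro C hC
  rw [← @isOpen_compl_iff _ _ t, ht, preimage_compl, preimage_compl, preimage_inl_image_inr,
    preimage_image_eq _ Sum.inr_injective, compl_empty, hm_top]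
  exact ⟨isOpen_univ, hC.isOpen_compl, subset_univ _⟩

end GlueingTopology

open GlueingTopology

theorem glueing_inl_isOpenEmbedding_inr_isClosedEmbedding_general
    {X₀ X₁ : Type*} [TopologicalSpace X₀] [TopologicalSpace X₁]
    (m : Set X₀ → Set X₁)
    (hm_top : m Set.univ = Set.univ)
    (t : TopologicalSpace (X₀ ⊕ X₁))
    (ht : ∀ S : Set (X₀ ⊕ X₁),
      IsOpen[t] S ↔
        IsOpen (Sum.inl ⁻¹' S) ∧ IsOpen (Sum.inr ⁻¹' S) ∧
          Sum.inr ⁻¹' S ⊆ m (Sum.inl ⁻¹' S)) :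
    @IsOpenEmbedding X₀ (X₀ ⊕ X₁) _ t Sum.inl ∧
      @IsClosedEmbedding X₁ (X₀ ⊕ X₁) _ t Sum.inr :=
  ⟨.of_continuous_injective_isOpenMap (continuous_inl ht) Sum.inl_injective (isOpenMap_inl ht),
    .of_continuous_injective_isClosedMap (continuous_inr ht) Sum.inr_injective
      (isClosedMap_inr ht hm_top)⟩

/-- For the glueing topology on `X₀ ⊔ X₁` determined by a
finite-intersection-preserving map `m` on open-set lattices (`U₀ ⊔ U₁` open iff
`U₀`, `U₁` open and `U₁ ⊆ m U₀`), the inclusion of `X₀` is an open embedding and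
the inclusion of `X₁` is a closed embedding. -/
theorem glueing_inl_isOpenEmbedding_inr_isClosedEmbedding
    {X₀ X₁ : Type*} [TopologicalSpace X₀] [TopologicalSpace X₁]
    (m : Set X₀ → Set X₁)
    (hm_open : ∀ U : Set X₀, IsOpen U → IsOpen (m U))
    (hm_top : m Set.univ = Set.univ)
    (hm_inter : ∀ U V : Set X₀, IsOpen U → IsOpen V → m (U ∩ V) = m U ∩ m V)
    (t : TopologicalSpace (X₀ ⊕ X₁))
    (ht : ∀ S : Set (X₀ ⊕ X₁),
      IsOpen[t] S ↔
        IsOpen (Sum.inl ⁻¹' S) ∧ IsOpen (Sum.inr ⁻¹' S) ∧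
          Sum.inr ⁻¹' S ⊆ m (Sum.inl ⁻¹' S)) :
    @IsOpenEmbedding X₀ (X₀ ⊕ X₁) _ t Sum.inl ∧
      @IsClosedEmbedding X₁ (X₀ ⊕ X₁) _ t Sum.inr :=
  glueing_inl_isOpenEmbedding_inr_isClosedEmbedding_general m hm_top t ht
end

section
/- Let X be a topological space, p : X → S continuous to the Sierpinski space, X₀ = p⁻¹(0), X₁ = p⁻¹(1), m(U₀) = interior(U₀ ∪ X₁) ∩ X₁, and X₀ +ₘ X₁ the glueing of X₀ and X₁ along m. Then the canonical bijection X₀ +ₘ X₁ → X (induced by the subspace inclusions) is a homeomorphism. -/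
/-! `X₀ = p⁻¹(True)` is open and `X₁` is its complement, so the canonical map is a bijection, and
a set `V ⊆ X` is open exactly when its traces on `X₀` and `X₁` are open and every point of `V ∩ X₁`
has a neighbourhood inside `(V ∩ X₀) ∪ X₁`: this is the openness condition of the glueing. -/

open Topology Set Function

theorem isOpen_iff_of_isOpen_of_isCompl {X : Type*} [TopologicalSpace X] {s u V : Set X}
    (hs : IsOpen s) (hsu : IsCompl s u) :
    IsOpen V ↔ IsOpen ((↑) ⁻¹' V : Set s) ∧ IsOpen ((↑) ⁻¹' V : Set u) ∧
      u ∩ V ⊆ interior (s ∩ V ∪ u) := by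
  have hcover : ∀ x, x ∈ s ∨ x ∈ u := fun x => by
    simpa using (hsu.sup_eq_top.ge (mem_univ x) : x ∈ s ∪ u)
  constructor
  · intro hV
    refine ⟨hV.preimage continuous_subtype_val, hV.preimage continuous_subtype_val, ?_⟩
    have hV_sub : V ⊆ s ∩ V ∪ u := fun x hx => (hcover x).imp (⟨·, hx⟩) id
    exact inter_subset_right.trans (interior_maximal hV_sub hV)
  · rintro ⟨hsV, huV, hsub⟩
    obtain ⟨W, hW, hWV⟩ := isOpen_induced_iff.1 huV
    rw [Subtype.preimage_coe_eq_preimage_coe_iff] at hWV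
    -- on `u` the set `V` is cut out by `W`, and near `u` it is confined to `s ∩ V ∪ u`
    have hV_eq : V = s ∩ V ∪ W ∩ interior (s ∩ V ∪ u) := by
      refine Subset.antisymm (fun x hx => ?_) (union_subset inter_subset_right ?_)
      · rcases hcover x with hxs | hxu
        · exact Or.inl ⟨hxs, hx⟩
        · exact Or.inr ⟨(hWV.ge ⟨hxu, hx⟩).2, hsub ⟨hxu, hx⟩⟩
      · rintro x ⟨hxW, hxI⟩
        rcases interior_subset hxI with ⟨-, hx⟩ | hxu
        · exact hx
        · exact (hWV.le ⟨hxu, hxW⟩).2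
    rw [hV_eq]
    have hsV_open : IsOpen (s ∩ V) :=
      Subtype.image_preimage_coe s V ▸ hs.isOpenMap_subtype_val _ hsV
    exact hsV_open.union (hW.inter isOpen_interior)

/-- For a continuous map `p : X → S` to the Sierpinski space
(`Prop`, open point `True`), with `X₀ = p⁻¹(0)`, `X₁ = p⁻¹(1)`,
`m U₀ = interior (U₀ ∪ X₁) ∩ X₁`, and `X₀ +ₘ X₁` the glueing of the subspaces
`X₀` and `X₁` along `m`, the canonical bijection `X₀ +ₘ X₁ → X` induced by the
subspace inclusions is a homeomorphism. -/
theorem glueing_along_sierpinski_map_isHomeomorph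
    {X : Type*} [TopologicalSpace X] (p : X → Prop) (hp : Continuous p)
    (X₀ X₁ : Set X) (hX₀ : X₀ = {x | p x}) (hX₁ : X₁ = {x | ¬ p x})
    (m : Set X → Set X) (hm : ∀ U, m U = interior (U ∪ X₁) ∩ X₁)
    (t : TopologicalSpace (↥X₀ ⊕ ↥X₁))
    (ht : ∀ S : Set (↥X₀ ⊕ ↥X₁),
      IsOpen[t] S ↔
        IsOpen (Sum.inl ⁻¹' S) ∧ IsOpen (Sum.inr ⁻¹' S) ∧
          Subtype.val '' (Sum.inr ⁻¹' S) ⊆ m (Subtype.val '' (Sum.inl ⁻¹' S))) :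
    @IsHomeomorph (↥X₀ ⊕ ↥X₁) X t _
      (Sum.elim (Subtype.val : X₀ → X) (Subtype.val : X₁ → X)) := by
  subst hX₀ hX₁
  classical
  have hbij : Bijective (Sum.elim (Subtype.val : {x | p x} → X) Subtype.val) :=
    (Equiv.sumCompl p).bijective
  have hcompl : IsCompl {x | p x} {x | ¬ p x} := isCompl_compl
  refine isHomeomorph_iff_isQuotientMap_injective.2
    ⟨(isQuotientMap_iff _).2 ⟨isCoinducing_iff.2 fun V => ?_, hbij.2⟩, hbij.1⟩
  rw [ht, isOpen_iff_of_isOpen_of_isCompl (continuous_Prop.1 hp) hcompl, hm]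
  simp only [preimage_preimage, Sum.elim_inl, Sum.elim_inr, Subtype.image_preimage_coe,
    subset_inter_iff, inter_subset_left, and_true]
end

section
/- Let B be a poset and for each b ∈ B a topological space F(b), and for each b ≤ b' a finite-intersection-preserving map F^b_{b'} : 𝒪(F(b)) → 𝒪(F(b')) with F^b_b = id and F^{b'}_{b''}(F^b_{b'}(U)) ⊆ F^b_{b''}(U) for b ≤ b' ≤ b''. Then the collection of subsets U of Σ_{b∈B} F(b) such that each U_b = {x | (x,b) ∈ U} is open in F(b) and U_{b'} ⊆ F^b_{b'}(U_b) for all b ≤ b', forms a topology on Σ_{b∈B} F(b); moreover each inclusion i_b : F(b) → Σ_{b∈B} F(b), x ↦ (x,b), is continuous with respect to it. -/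
open Topology

/-! The open sets of the lax colimit are those whose fibres are open and which are "lax-stable":
each fibre over `b'` lies in the image under `m` of the fibre over any `b ≤ b'`. Preservation of
`univ` and of binary intersections by `m` handles the finite intersections; for unions, the only
point is that a map preserving binary intersections of opens is monotone on opens, so the fibre
of one member of the union can be enlarged to the fibre of the whole union. -/

theorem Set.subset_of_map_inter_eq {α β : Type*} [TopologicalSpace α] {f : Set α → Set β}
    (hf : ∀ U V, IsOpen U → IsOpen V → f (U ∩ V) = f U ∩ f V) {U V : Set α}
    (hU : IsOpen U) (hV : IsOpen V) (hUV : U ⊆ V) : f U ⊆ f V := by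
  calc f U = f (U ∩ V) := by rw [Set.inter_eq_left.2 hUV]
    _ = f U ∩ f V := hf U V hU hV
    _ ⊆ f V := Set.inter_subset_right

namespace LaxColimit

variable {B : Type*} [PartialOrder B] {F : B → Type*} [∀ b, TopologicalSpace (F b)]
  (m : ∀ ⦃b b' : B⦄, b ≤ b' → Set (F b) → Set (F b'))

def IsLaxOpen (U : Set (Σ b, F b)) : Prop :=
  (∀ b, IsOpen (Sigma.mk b ⁻¹' U)) ∧
    ∀ ⦃b b'⦄ (h : b ≤ b'), Sigma.mk b' ⁻¹' U ⊆ m h (Sigma.mk b ⁻¹' U)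

variable {m}

theorem isLaxOpen_univ (hm_top : ∀ ⦃b b'⦄ (h : b ≤ b'), m h Set.univ = Set.univ) :
    IsLaxOpen m Set.univ :=
  ⟨fun _ => isOpen_univ, fun _ _ h => by simp only [Set.preimage_univ, hm_top h, subset_rfl]⟩

theorem IsLaxOpen.inter
    (hm_inter : ∀ ⦃b b'⦄ (h : b ≤ b') (U V : Set (F b)), IsOpen U → IsOpen V →
      m h (U ∩ V) = m h U ∩ m h V)
    {U V : Set (Σ b, F b)} (hU : IsLaxOpen m U) (hV : IsLaxOpen m V) :
    IsLaxOpen m (U ∩ V) := by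
  refine ⟨fun b => (hU.1 b).inter (hV.1 b), fun b b' h => ?_⟩
  rw [Set.preimage_inter, Set.preimage_inter, hm_inter h _ _ (hU.1 b) (hV.1 b)]
  exact Set.inter_subset_inter (hU.2 h) (hV.2 h)

theorem isLaxOpen_sUnion
    (hm_inter : ∀ ⦃b b'⦄ (h : b ≤ b') (U V : Set (F b)), IsOpen U → IsOpen V →
      m h (U ∩ V) = m h U ∩ m h V)
    {S : Set (Set (Σ b, F b))} (hS : ∀ U ∈ S, IsLaxOpen m U) :
    IsLaxOpen m (⋃₀ S) := by
  have fibre_open : ∀ b, IsOpen (Sigma.mk b ⁻¹' ⋃₀ S) := fun b => by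
    rw [Set.preimage_sUnion]
    exact isOpen_biUnion fun U hU => (hS U hU).1 b
  refine ⟨fibre_open, fun b b' h x hx => ?_⟩
  obtain ⟨U, hU, hxU⟩ := Set.mem_sUnion.1 hx
  exact Set.subset_of_map_inter_eq (hm_inter h) ((hS U hU).1 b) (fibre_open b)
    (Set.preimage_mono (Set.subset_sUnion_of_mem hU)) ((hS U hU).2 h hxU)

@[reducible]
def topology (hm_top : ∀ ⦃b b'⦄ (h : b ≤ b'), m h Set.univ = Set.univ)
    (hm_inter : ∀ ⦃b b'⦄ (h : b ≤ b') (U V : Set (F b)), IsOpen U → IsOpen V →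
      m h (U ∩ V) = m h U ∩ m h V) :
    TopologicalSpace (Σ b, F b) where
  IsOpen := IsLaxOpen m
  isOpen_univ := isLaxOpen_univ hm_top
  isOpen_inter _ _ := IsLaxOpen.inter hm_inter
  isOpen_sUnion _ := isLaxOpen_sUnion hm_inter

theorem continuous_sigmaMk {hm_top : ∀ ⦃b b'⦄ (h : b ≤ b'), m h Set.univ = Set.univ}
    {hm_inter : ∀ ⦃b b'⦄ (h : b ≤ b') (U V : Set (F b)), IsOpen U → IsOpen V →
      m h (U ∩ V) = m h U ∩ m h V} (b : B) :
    Continuous[_, topology hm_top hm_inter] (Sigma.mk b) :=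
  continuous_def.2 fun _ hU => hU.1 b

end LaxColimit

theorem lax_colimit_topology_exists_general
    {B : Type*} [PartialOrder B] (F : B → Type*) [∀ b, TopologicalSpace (F b)]
    (m : ∀ ⦃b b' : B⦄, b ≤ b' → Set (F b) → Set (F b'))
    (hm_top : ∀ ⦃b b'⦄ (h : b ≤ b'), m h Set.univ = Set.univ)
    (hm_inter : ∀ ⦃b b'⦄ (h : b ≤ b') (U V : Set (F b)), IsOpen U → IsOpen V →
      m h (U ∩ V) = m h U ∩ m h V) :
    ∃ t : TopologicalSpace (Σ b, F b),
      (∀ U : Set (Σ b, F b),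
        IsOpen[t] U ↔
          (∀ b, IsOpen (Sigma.mk b ⁻¹' U)) ∧
          (∀ ⦃b b'⦄ (h : b ≤ b'), Sigma.mk b' ⁻¹' U ⊆ m h (Sigma.mk b ⁻¹' U))) ∧
      (∀ b : B, Continuous[_, t] (Sigma.mk b)) :=
  ⟨LaxColimit.topology hm_top hm_inter, fun _ => Iff.rfl, LaxColimit.continuous_sigmaMk⟩

/-- Given a poset `B`, spaces `F b`, and finite-intersection
preserving maps `m h : 𝒪(F b) → 𝒪(F b')` for `h : b ≤ b'` with `m (refl) = id`
and `m h' (m h U) ⊆ m (h.trans h') U`, the sets `U ⊆ Σ b, F b` such that each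
fiber `Sigma.mk b ⁻¹' U` is open and `Sigma.mk b' ⁻¹' U ⊆ m h (Sigma.mk b ⁻¹' U)`
for all `h : b ≤ b'` form a topology, for which each inclusion
`i_b = Sigma.mk b : F b → Σ b, F b` is continuous. -/
theorem lax_colimit_topology_exists
    {B : Type*} [PartialOrder B] (F : B → Type*) [∀ b, TopologicalSpace (F b)]
    (m : ∀ ⦃b b' : B⦄, b ≤ b' → Set (F b) → Set (F b'))
    (hm_open : ∀ ⦃b b'⦄ (h : b ≤ b') (U : Set (F b)), IsOpen U → IsOpen (m h U))
    (hm_top : ∀ ⦃b b'⦄ (h : b ≤ b'), m h Set.univ = Set.univ)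
    (hm_inter : ∀ ⦃b b'⦄ (h : b ≤ b') (U V : Set (F b)), IsOpen U → IsOpen V →
      m h (U ∩ V) = m h U ∩ m h V)
    (hm_id : ∀ (b : B) (U : Set (F b)), m (le_refl b) U = U)
    (hm_comp : ∀ ⦃b b' b''⦄ (h : b ≤ b') (h' : b' ≤ b'') (U : Set (F b)),
      IsOpen U → m h' (m h U) ⊆ m (h.trans h') U) :
    ∃ t : TopologicalSpace (Σ b, F b),
      (∀ U : Set (Σ b, F b),
        IsOpen[t] U ↔
          (∀ b, IsOpen (Sigma.mk b ⁻¹' U)) ∧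
          (∀ ⦃b b'⦄ (h : b ≤ b'), Sigma.mk b' ⁻¹' U ⊆ m h (Sigma.mk b ⁻¹' U))) ∧
      (∀ b : B, Continuous[_, t] (Sigma.mk b)) :=
  lax_colimit_topology_exists_general F m hm_top hm_inter
end

section
/- Let X be a topological space and U ⊆ X an open subset. Then the subspace inclusion i : U → X is an exponentiable morphism in the category of topological spaces: the pullback functor along any map composed with i, i.e., the functor Top/X → Top/X given by pulling back to U and then composing with i (equivalently, (− ×_X U) : Top/X → Top/X), has a right adjoint. -/
open CategoryTheory TopologicalSpace

/-!
The right adjoint of pullback along the inclusion `i : U → X` is the dependent product `Π_i`: a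
space `B` over `U` goes to `B ⊔ (X \ U)` over `X`, with the coarsest topology in which the
projection to `X` is continuous and `B` is an open subspace. A map `A → Π_i B` over `X` is then
the same as a map `A|_U → B` over `U`, extended to the rest of `A` by sending each point to the
point of `X \ U` below it; the extension is continuous because `A|_U` is open in `A`. Composing
with `Over.map i ⊣ Over.pullback i` gives the right adjoint of `Over.pullback i ⋙ Over.map i`.
-/

section

variable {X : Type*} {U : Set X} {B : Type*}

-- `_p` only serves to fix the topology, defined below.
def ExtendByCompl (_p : B → U) : Type _ := B ⊕ ↥Uᶜ

namespace ExtendByCompl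

variable (p : B → U)

def inl : B → ExtendByCompl p := Sum.inl

def inr : ↥Uᶜ → ExtendByCompl p := Sum.inr

def proj : ExtendByCompl p → X := Sum.elim (fun b => (p b : X)) Subtype.val

@[simp]
lemma proj_inl (b : B) : proj p (inl p b) = p b := rfl

@[simp]
lemma proj_inr (x : ↥Uᶜ) : proj p (inr p x) = x := rfl

lemma inl_injective : Function.Injective (inl p) := Sum.inl_injective

@[simp]
lemma inl_ne_inr (b : B) (x : ↥Uᶜ) : inl p b ≠ inr p x := Sum.inl_ne_inr

@[simp]
lemma inr_notMem_image_inl (x : ↥Uᶜ) (O : Set B) : inr p x ∉ inl p '' O := by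
  simp

variable {p} in
lemma isLeft_of_proj_mem {w : ExtendByCompl p} (hw : proj p w ∈ U) : Sum.isLeft w := by
  cases w with
  | inl b => rfl
  | inr x => exact absurd hw x.2

variable {B' : Type*} (p' : B' → U)

def map (φ : B → B') : ExtendByCompl p → ExtendByCompl p' := Sum.map φ id

variable {A : Type*} (q : A → X)

open Classical in
noncomputable def lift (g : q ⁻¹' U → B) (a : A) : ExtendByCompl p :=
  if h : q a ∈ U then inl p (g ⟨a, h⟩) else inr p ⟨q a, h⟩

variable {p p' q}

section Lift

variable {g : q ⁻¹' U → B} {a : A}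

lemma lift_of_mem (h : q a ∈ U) : lift p q g a = inl p (g ⟨a, h⟩) := dif_pos h

lemma lift_of_notMem (h : q a ∉ U) : lift p q g a = inr p ⟨q a, h⟩ := dif_neg h

lemma proj_lift (hpg : ∀ y, (p (g y) : X) = q y) (a : A) : proj p (lift p q g a) = q a := by
  by_cases h : q a ∈ U
  · simp [lift_of_mem h, hpg]
  · simp [lift_of_notMem h]

lemma map_lift (φ : B → B') (a : A) :
    map p p' φ (lift p q g a) = lift p' q (φ ∘ g) a := by
  by_cases h : q a ∈ U
  · rw [lift_of_mem h, lift_of_mem h]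
    rfl
  · rw [lift_of_notMem h, lift_of_notMem h]
    rfl

end Lift

section Restrict

variable (k : A → ExtendByCompl p) (hk : ∀ a, proj p (k a) = q a)

def restrict (y : q ⁻¹' U) : B :=
  Sum.getLeft (k y) (isLeft_of_proj_mem (by rw [hk]; exact y.2))

lemma inl_restrict (y : q ⁻¹' U) : inl p (restrict k hk y) = k y := Sum.inl_getLeft _ _

lemma proj_restrict (y : q ⁻¹' U) : (p (restrict k hk y) : X) = q y := by
  rw [← proj_inl, inl_restrict, hk]

lemma lift_restrict : lift p q (restrict k hk) = k := by
  funext a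
  by_cases h : q a ∈ U
  · rw [lift_of_mem h, inl_restrict]
  · rw [lift_of_notMem h]
    have hka := hk a
    cases hk' : k a with
    | inl b => exact absurd (by rw [← hka, hk']; exact (p b).2) h
    | inr x => exact congrArg (inr p) (Subtype.ext (by rw [hk'] at hka; exact hka.symm))

end Restrict

lemma restrict_lift {g : q ⁻¹' U → B} (hpg : ∀ y, (p (g y) : X) = q y) :
    restrict (lift p q g) (proj_lift hpg) = g :=
  funext fun y => inl_injective p (by rw [inl_restrict, lift_of_mem (q := q) y.2]; rfl)

variable [TopologicalSpace X] [TopologicalSpace B]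

instance : TopologicalSpace (ExtendByCompl p) :=
  induced (proj p) ‹_› ⊓ generateFrom (Set.image (inl p) '' {O | IsOpen O})

variable (p) in
lemma continuous_proj : Continuous (proj p) :=
  continuous_iff_le_induced.2 inf_le_left

variable (p) in
lemma isOpen_image_inl {O : Set B} (hO : IsOpen O) : IsOpen (inl p '' O) :=
  inf_le_right (α := TopologicalSpace (ExtendByCompl p)) _ (isOpen_generateFrom_of_mem ⟨O, hO, rfl⟩)

variable [TopologicalSpace A]

lemma continuous_iff {k : A → ExtendByCompl p} : Continuous k ↔
    Continuous (proj p ∘ k) ∧ ∀ O : Set B, IsOpen O → IsOpen (k ⁻¹' (inl p '' O)) := by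
  refine (continuous_inf_rng (t₂ := induced (proj p) ‹_›) (t₃ := generateFrom _)).trans
    (and_congr continuous_induced_rng ?_)
  simp [continuous_generateFrom_iff]

lemma continuous_map [TopologicalSpace B'] {φ : B → B'} (hφ : Continuous φ)
    (hpφ : ∀ b, p' (φ b) = p b) : Continuous (map p p' φ) := by
  refine continuous_iff.2 ⟨?_, fun O hO => ?_⟩
  · have : proj p' ∘ map p p' φ = proj p := by
      ext (b | x)
      exacts [congrArg Subtype.val (hpφ b), rfl]
    rw [this]
    exact continuous_proj p
  · have : map p p' φ ⁻¹' (inl p' '' O) = inl p '' (φ ⁻¹' O) := by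
      ext (b | x)
      · exact (inl_injective p').mem_set_image.trans
          ((inl_injective p).mem_set_image (s := φ ⁻¹' O) (a := b)).symm
      · exact iff_of_false (inr_notMem_image_inl p' x O) (inr_notMem_image_inl p x _)
    rw [this]
    exact isOpen_image_inl p (hO.preimage hφ)

lemma continuous_lift (hU : IsOpen U) (hq : Continuous q) {g : q ⁻¹' U → B} (hg : Continuous g)
    (hpg : ∀ y, (p (g y) : X) = q y) : Continuous (lift p q g) := by
  refine continuous_iff.2 ⟨?_, fun O hO => ?_⟩
  · simpa [Function.comp_def, proj_lift hpg] using hq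
  · have : lift p q g ⁻¹' (inl p '' O) = Subtype.val '' (g ⁻¹' O) := by
      ext a
      by_cases h : q a ∈ U
      · simp [lift_of_mem h, (inl_injective p).mem_set_image, h]
      · simp [lift_of_notMem h, h]
    rw [this]
    exact (hU.preimage hq).isOpenMap_subtype_val _ (hO.preimage hg)

lemma continuous_restrict {k : A → ExtendByCompl p} (hkc : Continuous k)
    (hk : ∀ a, proj p (k a) = q a) : Continuous (restrict k hk) := by
  refine continuous_def.2 fun O hO => ?_
  have : restrict k hk ⁻¹' O = (k ∘ Subtype.val) ⁻¹' (inl p '' O) := by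
    ext y
    simp [← inl_restrict k hk y, (inl_injective p).mem_set_image]
  rw [this]
  exact (isOpen_image_inl p hO).preimage (hkc.comp continuous_subtype_val)

end ExtendByCompl

end

namespace TopCat

universe u

variable {X : TopCat.{u}}

lemma over_w_apply {A B : Over X} (φ : A ⟶ B) (y : A.left) : B.hom (φ.left y) = A.hom y :=
  ConcreteCategory.congr_hom (Over.w φ) y

variable (U : Set X)

def inclusion : of U ⟶ X := ofHom ⟨Subtype.val, continuous_subtype_val⟩

def restrictPreimageFunctor : Over X ⥤ Over (of U) where
  obj A := Over.mk (ofHom (A.hom.hom.restrictPreimage U))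
  map {A B} φ := Over.homMk
    (ofHom ⟨_, φ.left.hom.continuous.restrict (f := φ.left) (s := A.hom ⁻¹' U) (t := B.hom ⁻¹' U)
      fun y hy => by rwa [Set.mem_preimage, over_w_apply]⟩)
    (by ext y; exact over_w_apply φ y.1)

def extendByComplFunctor : Over (of U) ⥤ Over X where
  obj B := Over.mk (Y := of (ExtendByCompl B.hom))
    (ofHom ⟨ExtendByCompl.proj B.hom, ExtendByCompl.continuous_proj _⟩)
  map φ := Over.homMk
    (ofHom ⟨_, ExtendByCompl.continuous_map φ.left.hom.continuous (over_w_apply φ)⟩)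
    (by ext (b | x); exacts [congrArg Subtype.val (over_w_apply φ b), rfl])
  map_id _ := by ext (b | x) <;> rfl
  map_comp _ _ := by ext (b | x) <;> rfl

def mapRestrictPreimageAdj : Over.map (inclusion U) ⊣ restrictPreimageFunctor U :=
  Adjunction.mkOfHomEquiv
    { homEquiv B A :=
        { toFun k := Over.homMk
            (ofHom ⟨fun b => ⟨k.left b, by simp [over_w_apply k b, inclusion]⟩, by fun_prop⟩)
            (by ext b; exact over_w_apply k b)
          invFun h := Over.homMk (h.left ≫ ofHom ⟨Subtype.val, continuous_subtype_val⟩)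
            (by ext b; exact congrArg Subtype.val (over_w_apply h b))
          left_inv _ := rfl
          right_inv _ := rfl }
      homEquiv_naturality_left_symm _ _ := rfl
      homEquiv_naturality_right _ _ := rfl }

variable {U} in
lemma val_hom_left_apply {A : Over X} {B : Over (of U)} (h : (restrictPreimageFunctor U).obj A ⟶ B)
    (y : A.hom ⁻¹' U) : (B.hom (h.left y) : X) = A.hom y :=
  congrArg Subtype.val (over_w_apply h y)

open ExtendByCompl in
noncomputable def restrictPreimageExtendByComplAdj (hU : IsOpen U) :
    restrictPreimageFunctor U ⊣ extendByComplFunctor U :=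
  Adjunction.mkOfHomEquiv
    { homEquiv A B :=
        { toFun h := Over.homMk (ofHom ⟨lift B.hom A.hom h.left,
              continuous_lift hU A.hom.hom.continuous h.left.hom.continuous
                (val_hom_left_apply h)⟩)
            (by ext a; exact proj_lift (val_hom_left_apply h) a)
          invFun k := Over.homMk (ofHom ⟨restrict k.left (over_w_apply k),
              continuous_restrict k.left.hom.continuous (over_w_apply k)⟩)
            (by ext y; exact proj_restrict k.left (over_w_apply k) y)
          left_inv h := by
            ext y
            exact congrFun (restrict_lift (val_hom_left_apply h)) y
          right_inv k := by
            ext a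
            exact congrFun (lift_restrict k.left (over_w_apply k)) a }
      homEquiv_naturality_left_symm _ _ := rfl
      homEquiv_naturality_right h φ := by
        ext a
        exact (map_lift φ.left a).symm }

theorem isLeftAdjoint_pullback_inclusion (hU : IsOpen U) :
    (Over.pullback (inclusion U)).IsLeftAdjoint :=
  have := (restrictPreimageExtendByComplAdj U hU).isLeftAdjoint
  Functor.isLeftAdjoint_of_iso ((mapRestrictPreimageAdj U).rightAdjointUniq (Over.mapPullbackAdj _))

end TopCat

/-- The inclusion of an open subspace `U → X` is an
exponentiable morphism in `Top`: the functor `− ×_X U : Top/X → Top/X`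
(pullback along the inclusion followed by postcomposition with it) has a
right adjoint. -/
theorem open_inclusion_exponentiable
    (X : TopCat) (U : Set X) (hU : IsOpen U)
    (i : TopCat.of U ⟶ X)
    (hi : ∀ u : U, i u = (u : X)) :
    (Over.pullback i ⋙ Over.map i).IsLeftAdjoint := by
  obtain rfl : i = TopCat.inclusion U := by ext u; exact hi u
  have := TopCat.isLeftAdjoint_pullback_inclusion U hU
  infer_instance
end
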